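/- arXiv:0806.2533 — 3 statements merged into one kernel-verified Lean document; each statement's English description precedes it below -/
import Mathlib

section
/- Assume the minimizer of ‖y − Hd'‖² over d' ∈ S is unique. Then d ∈ S is this ML vector if and only if the noise vector n satisfies, for every k with 1 ≤ k ≤ 2N and every tuple (i_1,…,i_k) of k distinct indices in {1,…,2N}, the inequality (n + H(x − d) + Σ_{j=1}^{k} h_{i_j} d_{i_j})ᵀ (Σ_{j=1}^{k} h_{i_j} d_{i_j}) ≥ 0. -/
/-!
Every sign vector other than `d` arises from `d` by flipping the signs on a nonempty set `T` of
coordinates, which moves the residual `a = y - H d = n + H (x - d)` to `a + 2 v_T`, where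
`v_T = ∑_{i ∈ T} d_i h_i`. Since `‖a + 2 v‖² - ‖a‖² = 4 (a + v)ᵀ v`, the vector `d` is a
minimiser iff `(a + v_T)ᵀ v_T ≥ 0` for every `T`, and the sets `T` are exactly the images of the
injective index tuples.
-/

open Matrix BigOperators

/-- `Σ_{j=1}^{k} h_{i_j} d_{i_j}`, where `h_i` is the `i`-th column of `H` and the
tuple of indices is `u = (i_1, …, i_k)`. -/
def colComb (N k : ℕ) (H : Matrix (Fin (2 * N)) (Fin (2 * N)) ℝ)
    (d : Fin (2 * N) → ℝ) (u : Fin k → Fin (2 * N)) : Fin (2 * N) → ℝ :=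
  ∑ j, d (u j) • (fun r => H r (u j))

section SignFlip

variable {m ι : Type*} [DecidableEq ι]

def flipSigns (T : Finset ι) (d : ι → ℝ) : ι → ℝ :=
  fun i => if i ∈ T then -d i else d i

lemma flipSigns_mem_signs {d : ι → ℝ} (hd : ∀ i, d i = 1 ∨ d i = -1) (T : Finset ι) :
    ∀ i, flipSigns T d i = 1 ∨ flipSigns T d i = -1 := by
  intro i
  unfold flipSigns
  rcases hd i with h | h <;> split_ifs <;> simp [h]

lemma eq_flipSigns_filter_ne [Fintype ι] {d d' : ι → ℝ} (hd : ∀ i, d i = 1 ∨ d i = -1)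
    (hd' : ∀ i, d' i = 1 ∨ d' i = -1) :
    d' = flipSigns {i | d' i ≠ d i} d := by
  funext i
  unfold flipSigns
  rcases hd i with h | h <;> rcases hd' i with h' | h' <;> simp [h, h']

lemma sub_mulVec_flipSigns [Fintype ι] (H : Matrix m ι ℝ) (y : m → ℝ) (d : ι → ℝ)
    (T : Finset ι) :
    y - H *ᵥ flipSigns T d = y - H *ᵥ d + (2 : ℝ) • ∑ i ∈ T, d i • fun r => H r i := by
  funext r
  have hflip : (H *ᵥ d) r - (H *ᵥ flipSigns T d) r = 2 * ∑ i ∈ T, d i * H r i := by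
    calc (H *ᵥ d) r - (H *ᵥ flipSigns T d) r
        = ∑ i, if i ∈ T then 2 * (d i * H r i) else 0 := by
          simp only [mulVec, dotProduct, ← Finset.sum_sub_distrib]
          refine Finset.sum_congr rfl fun i _ => ?_
          unfold flipSigns
          split_ifs <;> ring
      _ = 2 * ∑ i ∈ T, d i * H r i := by
          rw [Finset.sum_ite_mem, Finset.univ_inter, Finset.mul_sum]
  simp only [Pi.add_apply, Pi.sub_apply, Pi.smul_apply, Finset.sum_apply, smul_eq_mul]
  linarith

lemma dotProduct_add_two_smul_self {n R : Type*} [Fintype n] [CommRing R] (a v : n → R) :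
    (a + (2 : R) • v) ⬝ᵥ (a + (2 : R) • v) = a ⬝ᵥ a + 4 * ((a + v) ⬝ᵥ v) := by
  simp only [add_dotProduct, dotProduct_add, smul_dotProduct, dotProduct_smul, smul_eq_mul,
    dotProduct_comm v a]
  ring

lemma forall_sign_residual_le_iff [Fintype m] [Fintype ι] (H : Matrix m ι ℝ) (y : m → ℝ)
    {d : ι → ℝ} (hd : ∀ i, d i = 1 ∨ d i = -1) :
    (∀ d' : ι → ℝ, (∀ i, d' i = 1 ∨ d' i = -1) →
      (y - H *ᵥ d) ⬝ᵥ (y - H *ᵥ d) ≤ (y - H *ᵥ d') ⬝ᵥ (y - H *ᵥ d')) ↔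
    ∀ T : Finset ι, 0 ≤ (y - H *ᵥ d + ∑ i ∈ T, d i • fun r => H r i) ⬝ᵥ
      ∑ i ∈ T, d i • fun r => H r i := by
  constructor
  · intro hmin T
    have := hmin _ (flipSigns_mem_signs hd T)
    rw [sub_mulVec_flipSigns, dotProduct_add_two_smul_self] at this
    linarith
  · intro hT d' hd'
    rw [eq_flipSigns_filter_ne hd hd', sub_mulVec_flipSigns, dotProduct_add_two_smul_self]
    linarith [hT {i | d' i ≠ d i}]

lemma forall_finset_iff_forall_injective_tuple [Fintype ι] {P : Finset ι → Prop} (h0 : P ∅) :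
    (∀ T, P T) ↔ ∀ k, 1 ≤ k → k ≤ Fintype.card ι → ∀ u : Fin k → ι, Function.Injective u →
      P (Finset.univ.image u) := by
  refine ⟨fun h _ _ _ u _ => h _, fun h T => ?_⟩
  rcases T.eq_empty_or_nonempty with rfl | hT
  · exact h0
  · have himage : Finset.univ.image (fun j => (T.equivFin.symm j : ι)) = T := by
      ext i
      simp only [Finset.mem_image, Finset.mem_univ, true_and]
      refine ⟨?_, fun hi => ⟨T.equivFin ⟨i, hi⟩, by simp⟩⟩
      rintro ⟨j, rfl⟩
      exact (T.equivFin.symm j).2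
    rw [← himage]
    exact h _ hT.card_pos (Finset.card_le_univ T) _
      (Subtype.val_injective.comp T.equivFin.symm.injective)

end SignFlip

lemma colComb_eq_sum_image {N k : ℕ} (H : Matrix (Fin (2 * N)) (Fin (2 * N)) ℝ)
    (d : Fin (2 * N) → ℝ) {u : Fin k → Fin (2 * N)} (hu : Function.Injective u) :
    colComb N k H d u = ∑ i ∈ Finset.univ.image u, d i • fun r => H r i := by
  rw [colComb, Finset.sum_image fun _ _ _ _ h => hu h]

theorem stmt_1_general (N : ℕ)
    (H : Matrix (Fin (2 * N)) (Fin (2 * N)) ℝ)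
    (x : Fin (2 * N) → ℝ)
    (n : Fin (2 * N) → ℝ)
    (y : Fin (2 * N) → ℝ) (hy : y = H.mulVec x + n)
    (d : Fin (2 * N) → ℝ) (hd : ∀ i, d i = 1 ∨ d i = -1) :
    (∀ d' : Fin (2 * N) → ℝ, (∀ i, d' i = 1 ∨ d' i = -1) →
      (y - H.mulVec d) ⬝ᵥ (y - H.mulVec d) ≤ (y - H.mulVec d') ⬝ᵥ (y - H.mulVec d'))
    ↔
    (∀ k : ℕ, 1 ≤ k → k ≤ 2 * N → ∀ u : Fin k → Fin (2 * N), Function.Injective u →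
      (n + H.mulVec (x - d) + colComb N k H d u) ⬝ᵥ colComb N k H d u ≥ 0) := by
  have hres : y - H *ᵥ d = n + H *ᵥ (x - d) := by
    rw [hy, mulVec_sub]
    abel
  rw [forall_sign_residual_le_iff H y hd,
    forall_finset_iff_forall_injective_tuple (by simp), Fintype.card_fin]
  refine forall₄_congr fun k _ _ u => forall_congr' fun hu => ?_
  rw [colComb_eq_sum_image H d hu, hres, ge_iff_le]

/-- assuming the minimizer of `‖y − Hd'‖²` over `d' ∈ S = {−1,+1}^{2N}`
is unique (with `y = Hx + n`), a vector `d ∈ S` is this ML vector if and only if the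
noise `n` satisfies, for every `k` with `1 ≤ k ≤ 2N` and every tuple of `k` distinct
indices, `(n + H(x − d) + Σ_j h_{i_j} d_{i_j})ᵀ (Σ_j h_{i_j} d_{i_j}) ≥ 0`. -/
theorem stmt_1 (N : ℕ) (hN : 1 ≤ N)
    (H : Matrix (Fin (2 * N)) (Fin (2 * N)) ℝ)
    (x : Fin (2 * N) → ℝ) (hx : ∀ i, x i = 1 ∨ x i = -1)
    (n : Fin (2 * N) → ℝ)
    (y : Fin (2 * N) → ℝ) (hy : y = H.mulVec x + n)
    (huniq : ∃! dml : Fin (2 * N) → ℝ, (∀ i, dml i = 1 ∨ dml i = -1) ∧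
      ∀ d' : Fin (2 * N) → ℝ, (∀ i, d' i = 1 ∨ d' i = -1) →
        (y - H.mulVec dml) ⬝ᵥ (y - H.mulVec dml) ≤ (y - H.mulVec d') ⬝ᵥ (y - H.mulVec d'))
    (d : Fin (2 * N) → ℝ) (hd : ∀ i, d i = 1 ∨ d i = -1) :
    (∀ d' : Fin (2 * N) → ℝ, (∀ i, d' i = 1 ∨ d' i = -1) →
      (y - H.mulVec d) ⬝ᵥ (y - H.mulVec d) ≤ (y - H.mulVec d') ⬝ᵥ (y - H.mulVec d'))
    ↔
    (∀ k : ℕ, 1 ≤ k → k ≤ 2 * N → ∀ u : Fin k → Fin (2 * N), Function.Injective u →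
      (n + H.mulVec (x - d) + colComb N k H d u) ⬝ᵥ colComb N k H d u ≥ 0) :=
  stmt_1_general N H x n y hy d hd
end

section
/- Assume the minimizer of ‖y − Hd'‖² over d' ∈ S is unique, where y = Hx + n. If the noise vector n belongs to R_d for some d ∈ S, then d is the ML vector, i.e., d minimizes ‖y − Hd'‖² over d' ∈ S. -/
/-!
Changing `d` into another sign vector `d'` flips the signs on the set `A` where they differ, so
`H d' = H d - 2 c` with `c = Σ_{i ∈ A} d_i h_i`. With `e = y - H d = n + H (x - d)` this gives
`‖y - H d'‖² = ‖e + 2c‖² = ‖e‖² + 4 (e + c)ᵀ c`, and `(e + c)ᵀ c ≥ 0` is precisely the defining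
inequality of `R_d` for the tuple enumerating `A` (trivially so when `A = ∅`).
-/

open Matrix BigOperators

/-- Membership of `v` in the region `R_{d^m}`: the defining inequalities hold for all
`k` with `1 ≤ k ≤ m` and all tuples of `k` distinct indices. -/
def memR (N : ℕ) (H : Matrix (Fin (2 * N)) (Fin (2 * N)) ℝ)
    (x d : Fin (2 * N) → ℝ) (m : ℕ) (v : Fin (2 * N) → ℝ) : Prop :=
  ∀ k : ℕ, 1 ≤ k → k ≤ m → ∀ u : Fin k → Fin (2 * N), Function.Injective u →
    (v + H.mulVec (x - d) + colComb N k H d u) ⬝ᵥ colComb N k H d u ≥ 0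

section DotProduct

variable {ι R : Type*} [Fintype ι]

theorem dotProduct_add_two_smul_self_s2 [CommRing R] (e c : ι → R) :
    (e + (2 : R) • c) ⬝ᵥ (e + (2 : R) • c) = e ⬝ᵥ e + 4 * ((e + c) ⬝ᵥ c) := by
  simp only [dotProduct_add, add_dotProduct, smul_dotProduct, dotProduct_smul, smul_eq_mul,
    dotProduct_comm c e]
  ring

theorem dotProduct_self_le_of_add_dotProduct_nonneg [CommRing R] [PartialOrder R]
    [IsOrderedRing R] {e c : ι → R} (h : 0 ≤ (e + c) ⬝ᵥ c) :
    e ⬝ᵥ e ≤ (e + (2 : R) • c) ⬝ᵥ (e + (2 : R) • c) := by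
  rw [dotProduct_add_two_smul_self_s2]
  exact le_add_of_nonneg_right (mul_nonneg (by norm_num) h)

end DotProduct

theorem eq_sub_two_smul_indicator_of_sign {ι : Type*} {d d' : ι → ℝ}
    (hd : ∀ i, d i = 1 ∨ d i = -1) (hd' : ∀ i, d' i = 1 ∨ d' i = -1) :
    d' = d - (2 : ℝ) • {i | d' i ≠ d i}.indicator d := by
  funext i
  by_cases h : d' i = d i
  · simp [h]
  · have hi : i ∈ {i | d' i ≠ d i} := h
    rw [Pi.sub_apply, Pi.smul_apply, Set.indicator_of_mem hi, smul_eq_mul]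
    rcases hd i with h1 | h1 <;> rcases hd' i with h2 | h2 <;> grind

theorem colComb_orderEmbOfFin (N : ℕ) (H : Matrix (Fin (2 * N)) (Fin (2 * N)) ℝ)
    (d : Fin (2 * N) → ℝ) (A : Finset (Fin (2 * N))) :
    colComb N A.card H d (A.orderEmbOfFin rfl) = H *ᵥ (A : Set (Fin (2 * N))).indicator d := by
  funext r
  have hsum := Finset.sum_map Finset.univ (A.orderEmbOfFin rfl).toEmbedding (fun i => H r i * d i)
  rw [Finset.map_orderEmbOfFin_univ] at hsum
  simp only [colComb, Finset.sum_apply, Pi.smul_apply, smul_eq_mul, mulVec, dotProduct,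
    Set.indicator_apply, Finset.mem_coe, mul_ite, mul_zero, Finset.sum_ite_mem, Finset.univ_inter]
  rw [hsum]
  exact Finset.sum_congr rfl fun _ _ => mul_comm _ _

theorem memR.add_mulVec_indicator_dotProduct_nonneg {N : ℕ}
    {H : Matrix (Fin (2 * N)) (Fin (2 * N)) ℝ} {x d v : Fin (2 * N) → ℝ}
    (hv : memR N H x d (2 * N) v) (s : Set (Fin (2 * N))) :
    0 ≤ (v + H *ᵥ (x - d) + H *ᵥ s.indicator d) ⬝ᵥ (H *ᵥ s.indicator d) := by
  obtain ⟨A, rfl⟩ := s.toFinite.exists_finset_coe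
  obtain rfl | hA := A.eq_empty_or_nonempty
  · simp only [Finset.coe_empty, Set.indicator_empty', mulVec_zero, dotProduct_zero, le_refl]
  rw [← colComb_orderEmbOfFin]
  refine hv A.card hA.card_pos ?_ _ (A.orderEmbOfFin rfl).injective
  simpa using A.card_le_univ

theorem stmt_2_general (N : ℕ)
    (H : Matrix (Fin (2 * N)) (Fin (2 * N)) ℝ)
    (x : Fin (2 * N) → ℝ)
    (n : Fin (2 * N) → ℝ)
    (y : Fin (2 * N) → ℝ) (hy : y = H.mulVec x + n)
    (d : Fin (2 * N) → ℝ) (hd : ∀ i, d i = 1 ∨ d i = -1)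
    (hn : memR N H x d (2 * N) n) :
    ∀ d' : Fin (2 * N) → ℝ, (∀ i, d' i = 1 ∨ d' i = -1) →
      (y - H.mulVec d) ⬝ᵥ (y - H.mulVec d) ≤ (y - H.mulVec d') ⬝ᵥ (y - H.mulVec d') := by
  intro d' hd'
  set c := H *ᵥ {i | d' i ≠ d i}.indicator d
  have herr : y - H *ᵥ d = n + H *ᵥ (x - d) := by
    rw [hy, mulVec_sub]
    abel
  have hflip : y - H *ᵥ d' = (y - H *ᵥ d) + (2 : ℝ) • c := by
    rw [eq_sub_two_smul_indicator_of_sign hd hd', mulVec_sub, mulVec_smul]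
    abel
  rw [hflip]
  apply dotProduct_self_le_of_add_dotProduct_nonneg
  rw [herr]
  exact hn.add_mulVec_indicator_dotProduct_nonneg _

/-- assuming the minimizer of `‖y − Hd'‖²` over `d' ∈ S = {−1,+1}^{2N}`
is unique (with `y = Hx + n`), if the noise vector `n` belongs to `R_d = R_{d^{2N}}`
for some `d ∈ S`, then `d` is the ML vector. -/
theorem stmt_2 (N : ℕ) (hN : 1 ≤ N)
    (H : Matrix (Fin (2 * N)) (Fin (2 * N)) ℝ)
    (x : Fin (2 * N) → ℝ) (hx : ∀ i, x i = 1 ∨ x i = -1)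
    (n : Fin (2 * N) → ℝ)
    (y : Fin (2 * N) → ℝ) (hy : y = H.mulVec x + n)
    (huniq : ∃! dml : Fin (2 * N) → ℝ, (∀ i, dml i = 1 ∨ dml i = -1) ∧
      ∀ d' : Fin (2 * N) → ℝ, (∀ i, d' i = 1 ∨ d' i = -1) →
        (y - H.mulVec dml) ⬝ᵥ (y - H.mulVec dml) ≤ (y - H.mulVec d') ⬝ᵥ (y - H.mulVec d'))
    (d : Fin (2 * N) → ℝ) (hd : ∀ i, d i = 1 ∨ d i = -1)
    (hn : memR N H x d (2 * N) n) :
    ∀ d' : Fin (2 * N) → ℝ, (∀ i, d' i = 1 ∨ d' i = -1) →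
      (y - H.mulVec d) ⬝ᵥ (y - H.mulVec d) ≤ (y - H.mulVec d') ⬝ᵥ (y - H.mulVec d') :=
  stmt_2_general N H x n y hy d hd hn
end

section
/- Assume that for every v ∈ ℝ^{2N} the minimizer of ‖(Hx + v) − Hd'‖² over d' ∈ S is unique. Then for any two distinct vectors d_i, d_j ∈ S, the regions R_{d_i} and R_{d_j} are disjoint: R_{d_i} ∩ R_{d_j} = ∅. -/
/-!
If `v ∈ R_d` and `d' ∈ S` differs from `d` exactly on the index set `T`, then
`H d' = H d - 2 s`, where `s` is the column combination of `d` over an enumeration of `T`.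
Writing `a = Hx + v - Hd`, one gets `‖a + 2 s‖² = ‖a‖² + 4 (a + s) ⬝ s`, and the defining
inequality of `R_d` for that enumeration says `(a + s) ⬝ s ≥ 0`. Hence for every `v ∈ R_d`,
`d` minimizes `‖Hx + v - Hd'‖²` over `S`, and a point of `R_{d_i} ∩ R_{d_j}` would have two
distinct minimizers.
-/

open Matrix BigOperators

lemma add_two_smul_dotProduct_self {n R : Type*} [Fintype n] [CommRing R] (a s : n → R) :
    (a + (2 : R) • s) ⬝ᵥ (a + (2 : R) • s) = a ⬝ᵥ a + 4 * ((a + s) ⬝ᵥ s) := by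
  simp only [two_smul, add_dotProduct, dotProduct_add, dotProduct_comm s a]
  ring

lemma sub_eq_two_smul_indicator {ι : Type*} {d d' : ι → ℝ}
    (hd : ∀ i, d i = 1 ∨ d i = -1) (hd' : ∀ i, d' i = 1 ∨ d' i = -1) :
    d - d' = (2 : ℝ) • {i | d' i ≠ d i}.indicator d := by
  funext i
  by_cases h : d' i = d i
  · simp [h]
  · rcases hd i with h1 | h1 <;> rcases hd' i with h2 | h2 <;>
      simp_all <;> norm_num

lemma colComb_eq_mulVec_indicator {N k : ℕ} (H : Matrix (Fin (2 * N)) (Fin (2 * N)) ℝ)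
    (d : Fin (2 * N) → ℝ) {u : Fin k → Fin (2 * N)} (hu : Function.Injective u) :
    colComb N k H d u = H *ᵥ (Set.range u).indicator d := by
  funext r
  have hrange : (Set.range u).toFinset = Finset.univ.image u := by
    ext i; simp
  simp only [colComb, Finset.sum_apply, Pi.smul_apply, smul_eq_mul, mulVec, dotProduct]
  rw [← Finset.sum_subset (Finset.subset_univ (Set.range u).toFinset), hrange,
    Finset.sum_image fun a _ b _ h => hu h]
  · exact Finset.sum_congr rfl fun j _ => by simp [mul_comm]
  · intro i _ hi
    rw [Set.mem_toFinset] at hi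
    simp [Set.indicator_of_notMem hi]

lemma dotProduct_self_le_of_memR {N : ℕ} {H : Matrix (Fin (2 * N)) (Fin (2 * N)) ℝ}
    {x d d' v : Fin (2 * N) → ℝ} (hd : ∀ i, d i = 1 ∨ d i = -1)
    (hd' : ∀ i, d' i = 1 ∨ d' i = -1) (hv : memR N H x d (2 * N) v) :
    (H *ᵥ x + v - H *ᵥ d) ⬝ᵥ (H *ᵥ x + v - H *ᵥ d) ≤
      (H *ᵥ x + v - H *ᵥ d') ⬝ᵥ (H *ᵥ x + v - H *ᵥ d') := by
  by_cases hdd : d' = d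
  · rw [hdd]
  set T := Finset.univ.filter fun i => d' i ≠ d i
  have hT : T.Nonempty := by
    obtain ⟨i, hi⟩ := Function.ne_iff.mp hdd
    exact ⟨i, by simpa [T] using hi⟩
  set u := T.orderEmbOfFin rfl
  have hs : colComb N T.card H d u = H *ᵥ {i | d' i ≠ d i}.indicator d := by
    rw [colComb_eq_mulVec_indicator H d u.injective, Finset.range_orderEmbOfFin]
    simp [T]
  set s := colComb N T.card H d u
  have hresidual : H *ᵥ x + v - H *ᵥ d' = H *ᵥ x + v - H *ᵥ d + (2 : ℝ) • s := by
    rw [hs, ← mulVec_smul, ← sub_eq_two_smul_indicator hd hd', mulVec_sub]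
    abel
  have hreg : (H *ᵥ x + v - H *ᵥ d + s) ⬝ᵥ s ≥ 0 := by
    have h := hv T.card hT.card_pos (by simpa using T.card_le_univ) u u.injective
    rwa [mulVec_sub, add_sub_assoc', add_comm v] at h
  calc (H *ᵥ x + v - H *ᵥ d) ⬝ᵥ (H *ᵥ x + v - H *ᵥ d)
      ≤ (H *ᵥ x + v - H *ᵥ d) ⬝ᵥ (H *ᵥ x + v - H *ᵥ d) +
          4 * ((H *ᵥ x + v - H *ᵥ d + s) ⬝ᵥ s) := by linarith
    _ = (H *ᵥ x + v - H *ᵥ d + (2 : ℝ) • s) ⬝ᵥ (H *ᵥ x + v - H *ᵥ d + (2 : ℝ) • s) :=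
        (add_two_smul_dotProduct_self _ _).symm
    _ = (H *ᵥ x + v - H *ᵥ d') ⬝ᵥ (H *ᵥ x + v - H *ᵥ d') := by rw [hresidual]

theorem stmt_3_general (N : ℕ)
    (H : Matrix (Fin (2 * N)) (Fin (2 * N)) ℝ)
    (x : Fin (2 * N) → ℝ)
    (huniq : ∀ v : Fin (2 * N) → ℝ,
      ∃! dml : Fin (2 * N) → ℝ, (∀ i, dml i = 1 ∨ dml i = -1) ∧
        ∀ d' : Fin (2 * N) → ℝ, (∀ i, d' i = 1 ∨ d' i = -1) →
          (H.mulVec x + v - H.mulVec dml) ⬝ᵥ (H.mulVec x + v - H.mulVec dml) ≤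
            (H.mulVec x + v - H.mulVec d') ⬝ᵥ (H.mulVec x + v - H.mulVec d'))
    (di dj : Fin (2 * N) → ℝ)
    (hdi : ∀ i, di i = 1 ∨ di i = -1) (hdj : ∀ i, dj i = 1 ∨ dj i = -1)
    (hne : di ≠ dj) :
    {v : Fin (2 * N) → ℝ | memR N H x di (2 * N) v} ∩
      {v : Fin (2 * N) → ℝ | memR N H x dj (2 * N) v} = ∅ := by
  refine Set.eq_empty_of_forall_notMem fun v ⟨hvi, hvj⟩ => hne ?_
  obtain ⟨_, _, hunique⟩ := huniq v
  have hi := hunique di ⟨hdi, fun _ hd' => dotProduct_self_le_of_memR hdi hd' hvi⟩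
  have hj := hunique dj ⟨hdj, fun _ hd' => dotProduct_self_le_of_memR hdj hd' hvj⟩
  exact hi.trans hj.symm

/-- assume that for every `v ∈ ℝ^{2N}` the minimizer of
`‖(Hx + v) − Hd'‖²` over `d' ∈ S = {−1,+1}^{2N}` is unique.  Then for any two
distinct `d_i, d_j ∈ S`, the regions `R_{d_i}` and `R_{d_j}` are disjoint. -/
theorem stmt_3 (N : ℕ) (hN : 1 ≤ N)
    (H : Matrix (Fin (2 * N)) (Fin (2 * N)) ℝ)
    (x : Fin (2 * N) → ℝ) (hx : ∀ i, x i = 1 ∨ x i = -1)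
    (huniq : ∀ v : Fin (2 * N) → ℝ,
      ∃! dml : Fin (2 * N) → ℝ, (∀ i, dml i = 1 ∨ dml i = -1) ∧
        ∀ d' : Fin (2 * N) → ℝ, (∀ i, d' i = 1 ∨ d' i = -1) →
          (H.mulVec x + v - H.mulVec dml) ⬝ᵥ (H.mulVec x + v - H.mulVec dml) ≤
            (H.mulVec x + v - H.mulVec d') ⬝ᵥ (H.mulVec x + v - H.mulVec d'))
    (di dj : Fin (2 * N) → ℝ)
    (hdi : ∀ i, di i = 1 ∨ di i = -1) (hdj : ∀ i, dj i = 1 ∨ dj i = -1)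
    (hne : di ≠ dj) :
    {v : Fin (2 * N) → ℝ | memR N H x di (2 * N) v} ∩
      {v : Fin (2 * N) → ℝ | memR N H x dj (2 * N) v} = ∅ :=
  stmt_3_general N H x huniq di dj hdi hdj hne
end
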